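/- Let Δ ≥ 2 and let G be a connected infinite Δ-regular graph. For every q with 0 < q < 1/Δ, strategy A becomes epidemic in the A–B coordination game (G, q); moreover, it suffices to take the initial set S₀ to be a single vertex. -/

import Mathlib

namespace Contagion

open scoped BigOperators

/-- The three strategies in the contagion game. -/
inductive Strat
  | A | B | AB
deriving DecidableEq

/-- Pairwise payoff to a player using the first strategy against a neighbor
using the second strategy, in the contagion game with parameters `q, r`. -/
noncomputable def pairPayoff (q r : ℝ) : Strat → Strat → ℝ
  | .A, .A => 1 - q
  | .A, .B => 0
  | .A, .AB => 1 - q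
  | .B, .A => 0
  | .B, .B => q
  | .B, .AB => q
  | .AB, .A => 1 - q - r
  | .AB, .B => q - r
  | .AB, .AB => max q (1 - q) - r

variable {V : Type*}

/-- Total payoff to vertex `v` for playing strategy `s` against profile `σ`. -/
noncomputable def totalPayoff (G : SimpleGraph V) (q r : ℝ) (σ : V → Strat)
    (v : V) (s : Strat) : ℝ :=
  ∑ᶠ u ∈ G.neighborSet v, pairPayoff q r s (σ u)

/-- `s` is a best response of vertex `v` to the profile `σ`. -/
def IsBestResponse (G : SimpleGraph V) (q r : ℝ) (σ : V → Strat) (v : V) (s : Strat) : Prop :=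
  ∀ s' : Strat, totalPayoff G q r σ v s' ≤ totalPayoff G q r σ v s

/-- Strategy `A` becomes epidemic in the contagion game `(G, q, r)`:
there are a finite initial set `S₀` (playing `A`, everybody else playing `B`) and a
sequence `α` of vertices in which every vertex appears at least once, such that updating
at step `n` the vertex `α n` to a best response makes every vertex eventually adopt `A`. -/
def Epidemic (G : SimpleGraph V) (q r : ℝ) : Prop :=
  ∃ (S₀ : Set V) (α : ℕ → V) (σ : ℕ → V → Strat),
    S₀.Finite ∧
    Function.Surjective α ∧
    (∀ v ∈ S₀, σ 0 v = Strat.A) ∧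
    (∀ v ∉ S₀, σ 0 v = Strat.B) ∧
    (∀ n, IsBestResponse G q r (σ n) (α n) (σ (n + 1) (α n))) ∧
    (∀ n v, v ≠ α n → σ (n + 1) v = σ n v) ∧
    (∀ v, ∃ n, σ n v = Strat.A)

/-- The epidemic region `Ω_G ⊆ ℝ²` of `G`. -/
def epidemicRegion (G : SimpleGraph V) : Set (ℝ × ℝ) :=
  {p | 0 < p.1 ∧ p.1 < 1 ∧ 0 < p.2 ∧ Epidemic G p.1 p.2}

/-- `G` is `Δ`-regular: every vertex has exactly `Δ` neighbors. -/
def IsRegular (G : SimpleGraph V) (Δ : ℕ) : Prop :=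
  ∀ v, (G.neighborSet v).ncard = Δ

/-- The number of neighbors of `v` lying in the set `S`. -/
noncomputable def degIn (G : SimpleGraph V) (v : V) (S : Set V) : ℕ :=
  (G.neighborSet v ∩ S).ncard

/-- `RT Δ`: the infinite rooted tree in which the root (the empty list) has `Δ - 1`
children and every other vertex also has `Δ - 1` children (hence degree `Δ`). -/
def RT (Δ : ℕ) : SimpleGraph (List (Fin (Δ - 1))) :=
  SimpleGraph.fromRel (fun l l' => ∃ a : Fin (Δ - 1), l' = a :: l)

/-- `G` contains a subgraph isomorphic to `RT Δ`. -/
def HasRTCopy (Δ : ℕ) (G : SimpleGraph V) : Prop :=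
  ∃ f : List (Fin (Δ - 1)) → V,
    Function.Injective f ∧ ∀ x y, (RT Δ).Adj x y → G.Adj (f x) (f y)

/-- The thick half line `HL_Δ` (for even `Δ`), columns indexed by `ℕ` starting with the
first column `0`; `(k, i)` and `(l, j)` are adjacent exactly when `|k - l| = 1`. -/
def HL (Δ : ℕ) : SimpleGraph (ℕ × Fin (Δ / 2)) :=
  SimpleGraph.fromRel (fun x y => y.1 = x.1 + 1)

/-- The epidemic region of the infinite `Δ`-regular tree:
`{(q,r) : q,r > 0, r ≥ ((Δ-1)/Δ)q, q ≤ 1/Δ} ∪ {(q,r) : q,r > 0, 2q + Δr ≤ 1}`. -/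
def treeRegion (Δ : ℕ) : Set (ℝ × ℝ) :=
  {p | 0 < p.1 ∧ 0 < p.2 ∧ ((Δ : ℝ) - 1) / Δ * p.1 ≤ p.2 ∧ p.1 ≤ 1 / Δ} ∪
  {p | 0 < p.1 ∧ 0 < p.2 ∧ 2 * p.1 + Δ * p.2 ≤ 1}

/-- The epidemic region of the thick line `L_Δ`:
`{(q,r) : 0 < q ≤ 1/2, r ≥ q/2} ∪ {(q,r) : q,r > 0, r ≤ q/2, 2q + 2r ≤ 1}`. -/
def thickLineRegion : Set (ℝ × ℝ) :=
  {p | 0 < p.1 ∧ p.1 ≤ 1 / 2 ∧ p.1 / 2 ≤ p.2} ∪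
  {p | 0 < p.1 ∧ 0 < p.2 ∧ p.2 ≤ p.1 / 2 ∧ 2 * p.1 + 2 * p.2 ≤ 1}

/-- `(SAB, SB)` is a blocking structure for the contagion game `(G, q, r)`
on a `Δ`-regular graph `G`. -/
def IsBlockingStructure (G : SimpleGraph V) (Δ : ℕ) (q r : ℝ) (SAB SB : Set V) : Prop :=
  Disjoint SAB SB ∧ (SAB.Nonempty ∨ SB.Nonempty) ∧
  (∀ v ∈ SAB, r / q * Δ < (degIn G v SB : ℝ)) ∧
  ∀ v ∈ SB,
    (1 - q - r) * Δ < (1 - q) * (degIn G v SB : ℝ) + min q (1 - q) * (degIn G v SAB : ℝ) ∧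
    (1 - q) * Δ < (degIn G v SB : ℝ) + q * (degIn G v SAB : ℝ)

/-- The two strategies of the `A`-`B` coordination game. -/
inductive CStrat
  | A | B
deriving DecidableEq

/-- Pairwise payoff in the `A`-`B` coordination game `(G, q)`. -/
noncomputable def cPairPayoff (q : ℝ) : CStrat → CStrat → ℝ
  | .A, .A => 1 - q
  | .A, .B => 0
  | .B, .A => 0
  | .B, .B => q

/-- Total payoff to `v` for playing `s` against profile `σ` in the coordination game. -/
noncomputable def cTotalPayoff (G : SimpleGraph V) (q : ℝ) (σ : V → CStrat)
    (v : V) (s : CStrat) : ℝ :=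
  ∑ᶠ u ∈ G.neighborSet v, cPairPayoff q s (σ u)

/-- `s` is a best response of `v` to `σ` in the coordination game. -/
def CIsBestResponse (G : SimpleGraph V) (q : ℝ) (σ : V → CStrat) (v : V) (s : CStrat) : Prop :=
  ∀ s' : CStrat, cTotalPayoff G q σ v s' ≤ cTotalPayoff G q σ v s

/-- Strategy `A` becomes epidemic in the coordination game `(G, q)` starting from the
initial set `S₀`. -/
def CoordEpidemicFrom (G : SimpleGraph V) (q : ℝ) (S₀ : Set V) : Prop :=
  ∃ (α : ℕ → V) (σ : ℕ → V → CStrat),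
    Function.Surjective α ∧
    (∀ v ∈ S₀, σ 0 v = CStrat.A) ∧
    (∀ v ∉ S₀, σ 0 v = CStrat.B) ∧
    (∀ n, CIsBestResponse G q (σ n) (α n) (σ (n + 1) (α n))) ∧
    (∀ n v, v ≠ α n → σ (n + 1) v = σ n v) ∧
    (∀ v, ∃ n, σ n v = CStrat.A)

/-- Strategy `A` becomes epidemic in the coordination game `(G, q)`. -/
def CoordEpidemic (G : SimpleGraph V) (q : ℝ) : Prop :=
  ∃ S₀ : Set V, S₀.Finite ∧ CoordEpidemicFrom G q S₀

/-!
If `q · deg v ≤ 1`, a vertex with at least one `A`-neighbour has a best response `A`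
(payoff at least `1 - q ≥ q (deg v - 1)`), and one without has best response `B`. Seed a
vertex `v₀` and first update a neighbour `w`: from then on every `A`-player has an
`A`-neighbour, so no `A`-player ever reverts to `B`. A connected locally finite graph is
countable, so some update sequence visits every vertex infinitely often, and along it `A`
travels down every walk from `v₀`.
-/

theorem _root_.Set.Finite.finsum_mem_const {α M : Type*} [AddCommMonoid M] {s : Set α}
    (hs : s.Finite) (c : M) : ∑ᶠ _ ∈ s, c = s.ncard • c := by
  rw [finsum_mem_eq_finite_toFinset_sum _ hs, Finset.sum_const, Set.ncard_eq_toFinset_card _ hs]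

section

variable {G : SimpleGraph V}

theorem _root_.SimpleGraph.finite_setOf_exists_walk_length_eq
    (hfin : ∀ v, (G.neighborSet v).Finite) (v₀ : V) (k : ℕ) :
    {v | ∃ p : G.Walk v v₀, p.length = k}.Finite := by
  induction k with
  | zero =>
    refine (Set.finite_singleton v₀).subset ?_
    rintro v ⟨p, hp⟩
    exact SimpleGraph.Walk.eq_of_length_eq_zero hp
  | succ k ih =>
    refine (ih.biUnion fun u _ => hfin u).subset ?_
    rintro v ⟨_ | ⟨hadj, p⟩, hp⟩
    · simp at hp
    · exact Set.mem_biUnion ⟨p, by simpa using hp⟩ hadj.symm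

theorem _root_.SimpleGraph.Connected.countable_of_finite_neighborSet (hconn : G.Connected)
    (hfin : ∀ v, (G.neighborSet v).Finite) : Countable V := by
  obtain ⟨v₀⟩ := hconn.nonempty
  refine Set.countable_univ_iff.mp ((Set.countable_iUnion fun k =>
    (G.finite_setOf_exists_walk_length_eq hfin v₀ k).countable).mono fun v _ => ?_)
  obtain ⟨p⟩ := hconn v v₀
  exact Set.mem_iUnion.mpr ⟨p.length, p, rfl⟩

theorem exists_seq_zero_eq_and_frequently_eq {X : Type*} [Countable X] (x₀ : X) :
    ∃ α : ℕ → X, α 0 = x₀ ∧ ∀ x N, ∃ n, N ≤ n ∧ α n = x := by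
  have : Nonempty X := ⟨x₀⟩
  obtain ⟨e, he⟩ := exists_surjective_nat X
  refine ⟨fun | 0 => x₀ | n + 1 => e n.unpair.1, rfl, fun x N => ?_⟩
  obtain ⟨a, rfl⟩ := he x
  exact ⟨Nat.pair a N + 1, (Nat.right_le_pair a N).trans (Nat.le_succ _), by simp⟩

variable {q : ℝ} {σ τ : V → CStrat} {v x : V}

theorem setOf_eq_B_eq_compl (σ : V → CStrat) : {u | σ u = .B} = {u | σ u = .A}ᶜ := by
  ext u
  simp only [Set.mem_ofPred_eq, Set.mem_compl_iff]
  cases σ u <;> simp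

theorem cTotalPayoff_eq (hfin : (G.neighborSet v).Finite) (s : CStrat) :
    cTotalPayoff G q σ v s = cPairPayoff q s .A * degIn G v {u | σ u = .A}
      + cPairPayoff q s .B * degIn G v {u | σ u = .B} := by
  have hA : ∀ u ∈ G.neighborSet v ∩ {u | σ u = .A}, cPairPayoff q s (σ u) = cPairPayoff q s .A :=
    fun u hu => by rw [hu.2.out]
  have hB : ∀ u ∈ G.neighborSet v ∩ {u | σ u = .B}, cPairPayoff q s (σ u) = cPairPayoff q s .B :=
    fun u hu => by rw [hu.2.out]
  have hsplit := Set.inter_union_compl (G.neighborSet v) {u | σ u = .A}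
  rw [← setOf_eq_B_eq_compl] at hsplit
  rw [cTotalPayoff, ← hsplit,
    finsum_mem_union ((disjoint_compl_right (a := {u | σ u = CStrat.A})).mono
      Set.inter_subset_right (setOf_eq_B_eq_compl σ ▸ Set.inter_subset_right))
      (hfin.inter_of_left _) (hfin.inter_of_left _),
    finsum_mem_congr rfl hA, finsum_mem_congr rfl hB, (hfin.inter_of_left _).finsum_mem_const,
    (hfin.inter_of_left _).finsum_mem_const, nsmul_eq_mul, nsmul_eq_mul, degIn, degIn]
  ring

theorem degIn_A_add_degIn_B (hfin : (G.neighborSet v).Finite) :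
    degIn G v {u | σ u = .A} + degIn G v {u | σ u = .B} = (G.neighborSet v).ncard := by
  rw [degIn, degIn, setOf_eq_B_eq_compl, ← Set.sdiff_eq,
    Set.ncard_inter_add_ncard_sdiff_eq_ncard _ _ hfin]

theorem cIsBestResponse_A_of_adj (hfin : (G.neighborSet v).Finite)
    (hdeg : q * (G.neighborSet v).ncard ≤ 1) (hA : ∃ u, G.Adj v u ∧ σ u = .A) :
    CIsBestResponse G q σ v .A := by
  have hpos : (1 : ℝ) ≤ degIn G v {u | σ u = .A} := by
    obtain ⟨u, hadj, hu⟩ := hA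
    exact_mod_cast (Set.ncard_pos (hfin.inter_of_left _)).mpr ⟨u, hadj, hu⟩
  have hsum : (degIn G v {u | σ u = .A} : ℝ) + degIn G v {u | σ u = .B}
      = (G.neighborSet v).ncard := by
    exact_mod_cast degIn_A_add_degIn_B hfin
  rintro (_ | _)
  · exact le_rfl
  · rw [cTotalPayoff_eq hfin, cTotalPayoff_eq hfin]
    simp only [cPairPayoff]
    linear_combination hpos + hdeg + q * hsum

theorem cIsBestResponse_B_of_not_adj (hfin : (G.neighborSet v).Finite) (hq : 0 ≤ q)
    (hA : ¬∃ u, G.Adj v u ∧ σ u = .A) : CIsBestResponse G q σ v .B := by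
  have hzero : degIn G v {u | σ u = .A} = 0 := by
    rw [degIn, Set.ncard_eq_zero (hfin.inter_of_left _), Set.eq_empty_iff_forall_notMem]
    exact fun u hu => hA ⟨u, hu⟩
  rintro (_ | _)
  · rw [cTotalPayoff_eq hfin, cTotalPayoff_eq hfin, hzero]
    simp only [cPairPayoff, Nat.cast_zero, mul_zero, zero_mul, add_zero, zero_add]
    positivity
  · exact le_rfl

open Classical in
noncomputable def bestResponseUpdate (G : SimpleGraph V) (τ : V → CStrat) (x : V) :
    V → CStrat :=
  Function.update τ x (if ∃ u, G.Adj x u ∧ τ u = .A then .A else .B)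

theorem bestResponseUpdate_of_ne (h : v ≠ x) : bestResponseUpdate G τ x v = τ v := by
  classical exact Function.update_of_ne h _ _

theorem bestResponseUpdate_self_eq_A_iff :
    bestResponseUpdate G τ x x = .A ↔ ∃ u, G.Adj x u ∧ τ u = .A := by
  classical
  by_cases h : ∃ u, G.Adj x u ∧ τ u = .A <;> simp [bestResponseUpdate, h]

theorem cIsBestResponse_bestResponseUpdate (hfin : (G.neighborSet x).Finite)
    (hdeg : q * (G.neighborSet x).ncard ≤ 1) (hq : 0 ≤ q) :
    CIsBestResponse G q τ x (bestResponseUpdate G τ x x) := by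
  by_cases h : ∃ u, G.Adj x u ∧ τ u = .A
  · rw [bestResponseUpdate_self_eq_A_iff.mpr h]
    exact cIsBestResponse_A_of_adj hfin hdeg h
  · have : bestResponseUpdate G τ x x = .B := by
      cases hx : bestResponseUpdate G τ x x
      · exact absurd (bestResponseUpdate_self_eq_A_iff.mp hx) h
      · rfl
    rw [this]
    exact cIsBestResponse_B_of_not_adj hfin hq h

def IsSelfSustaining (G : SimpleGraph V) (τ : V → CStrat) : Prop :=
  ∀ v, τ v = .A → ∃ u, G.Adj v u ∧ τ u = .A

theorem IsSelfSustaining.bestResponseUpdate_eq_A (h : IsSelfSustaining G τ) (hv : τ v = .A) :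
    bestResponseUpdate G τ x v = .A := by
  by_cases hvx : v = x
  · subst hvx
    exact bestResponseUpdate_self_eq_A_iff.mpr (h v hv)
  · rwa [bestResponseUpdate_of_ne hvx]

theorem IsSelfSustaining.bestResponseUpdate (h : IsSelfSustaining G τ) :
    IsSelfSustaining G (bestResponseUpdate G τ x) := by
  intro v hv
  obtain ⟨u, hadj, hu⟩ : ∃ u, G.Adj v u ∧ τ u = .A := by
    by_cases hvx : v = x
    · subst hvx
      exact bestResponseUpdate_self_eq_A_iff.mp hv
    · exact h v (by rwa [bestResponseUpdate_of_ne hvx] at hv)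
  exact ⟨u, hadj, h.bestResponseUpdate_eq_A hu⟩

theorem isSelfSustaining_bestResponseUpdate_singleton [DecidableEq V] {v₀ w : V}
    (hadj : G.Adj v₀ w) :
    IsSelfSustaining G (bestResponseUpdate G (fun v => if v = v₀ then .A else .B) w) := by
  have hw : bestResponseUpdate G (fun v => if v = v₀ then .A else .B) w w = .A :=
    bestResponseUpdate_self_eq_A_iff.mpr ⟨v₀, hadj.symm, if_pos rfl⟩
  have hv₀ : bestResponseUpdate G (fun v => if v = v₀ then .A else .B) w v₀ = .A := by
    rw [bestResponseUpdate_of_ne hadj.ne, if_pos rfl]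
  intro v hv
  by_cases hvw : v = w
  · exact ⟨v₀, hvw ▸ hadj.symm, hv₀⟩
  · rw [bestResponseUpdate_of_ne hvw] at hv
    obtain rfl : v = v₀ := by
      by_contra hne
      simp [hne] at hv
    exact ⟨w, hadj, hw⟩

noncomputable def updateSeq (G : SimpleGraph V) (τ₀ : V → CStrat) (α : ℕ → V) : ℕ → V → CStrat
  | 0 => τ₀
  | n + 1 => bestResponseUpdate G (updateSeq G τ₀ α n) (α n)

variable {τ₀ : V → CStrat} {α : ℕ → V} {N : ℕ}

theorem isSelfSustaining_updateSeq (hN : IsSelfSustaining G (updateSeq G τ₀ α N)) {n : ℕ}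
    (hn : N ≤ n) : IsSelfSustaining G (updateSeq G τ₀ α n) := by
  induction n, hn using Nat.le_induction with
  | base => exact hN
  | succ n _ ih => exact ih.bestResponseUpdate

theorem updateSeq_eq_A_mono (hN : IsSelfSustaining G (updateSeq G τ₀ α N)) {m n : ℕ}
    (hm : N ≤ m) (hmn : m ≤ n) (hv : updateSeq G τ₀ α m v = .A) :
    updateSeq G τ₀ α n v = .A := by
  induction n, hmn using Nat.le_induction with
  | base => exact hv
  | succ n hmn ih => exact (isSelfSustaining_updateSeq hN (hm.trans hmn)).bestResponseUpdate_eq_A ih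

theorem updateSeq_eventually_eq_A (hconn : G.Preconnected)
    (hα : ∀ x k, ∃ n, k ≤ n ∧ α n = x) (hN : IsSelfSustaining G (updateSeq G τ₀ α N))
    {v₀ : V} (hv₀ : updateSeq G τ₀ α N v₀ = .A) (v : V) :
    ∃ n, N ≤ n ∧ updateSeq G τ₀ α n v = .A := by
  obtain ⟨p⟩ := hconn v v₀
  induction p with
  | nil => exact ⟨N, le_rfl, hv₀⟩
  | @cons u b _ hadj _ ih =>
    obtain ⟨n, hn, hb⟩ := ih hv₀
    obtain ⟨m, hm, rfl⟩ := hα u n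
    exact ⟨m + 1, hn.trans (hm.trans m.le_succ), bestResponseUpdate_self_eq_A_iff.mpr
      ⟨b, hadj, updateSeq_eq_A_mono hN hn hm hb⟩⟩

theorem coordEpidemicFrom_singleton (hconn : G.Connected) (hfin : ∀ v, (G.neighborSet v).Finite)
    (hdeg : ∀ v, q * (G.neighborSet v).ncard ≤ 1) (hq : 0 ≤ q) {v₀ w : V} (hadj : G.Adj v₀ w) :
    CoordEpidemicFrom G q {v₀} := by
  classical
  have := hconn.countable_of_finite_neighborSet hfin
  obtain ⟨α, hα0, hα⟩ := exists_seq_zero_eq_and_frequently_eq w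
  have h₁ : IsSelfSustaining G (updateSeq G (fun v => if v = v₀ then .A else .B) α 1) := by
    simpa [updateSeq, hα0] using isSelfSustaining_bestResponseUpdate_singleton hadj
  refine ⟨α, updateSeq G (fun v => if v = v₀ then .A else .B) α,
    fun v => (hα v 0).imp fun _ => And.right, fun v hv => if_pos hv, fun v hv => if_neg hv,
    fun n => cIsBestResponse_bestResponseUpdate (hfin _) (hdeg _) hq,
    fun n v hv => bestResponseUpdate_of_ne hv, fun v => ?_⟩
  obtain ⟨n, -, hn⟩ := updateSeq_eventually_eq_A hconn.preconnected hα h₁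
    (v₀ := v₀) (by simp [updateSeq, hα0, bestResponseUpdate_of_ne hadj.ne]) v
  exact ⟨n, hn⟩

end

theorem coord_epidemic_of_small_q_general {V : Type*} (Δ : ℕ) (hΔ : 2 ≤ Δ)
    (G : SimpleGraph V) (hConn : G.Connected) (hReg : IsRegular G Δ)
    (q : ℝ) (hq0 : 0 < q) (hq : q < 1 / Δ) :
    CoordEpidemic G q ∧ ∃ v₀ : V, CoordEpidemicFrom G q ({v₀} : Set V) := by
  have hΔpos : (0 : ℝ) < Δ := by positivity
  have hfin : ∀ v, (G.neighborSet v).Finite := fun v =>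
    Set.finite_of_ncard_ne_zero (by rw [hReg v]; omega)
  have hdeg : ∀ v, q * (G.neighborSet v).ncard ≤ 1 := fun v => by
    rw [hReg v]
    exact ((lt_div_iff₀ hΔpos).mp hq).le
  obtain ⟨v₀⟩ := hConn.nonempty
  obtain ⟨w, hw⟩ : (G.neighborSet v₀).Nonempty :=
    Set.nonempty_of_ncard_ne_zero (by rw [hReg v₀]; omega)
  have hepi := coordEpidemicFrom_singleton hConn hfin hdeg hq0.le hw
  exact ⟨⟨{v₀}, Set.finite_singleton v₀, hepi⟩, v₀, hepi⟩

/-- In the `A`-`B` coordination game `(G, q)` on a connected infinite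
`Δ`-regular graph with `0 < q < 1/Δ`, strategy `A` becomes epidemic; moreover it suffices
to take the initial set to be a single vertex. -/
theorem coord_epidemic_of_small_q {V : Type*} (Δ : ℕ) (hΔ : 2 ≤ Δ)
    (G : SimpleGraph V) (hInf : Infinite V) (hConn : G.Connected) (hReg : IsRegular G Δ)
    (q : ℝ) (hq0 : 0 < q) (hq : q < 1 / Δ) :
    CoordEpidemic G q ∧ ∃ v₀ : V, CoordEpidemicFrom G q ({v₀} : Set V) :=
  coord_epidemic_of_small_q_general Δ hΔ G hConn hReg q hq0 hq

end Contagion
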